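/- In ℚ(v)[V], with P'_k = ∏_{j=0}^{k-1}(V - v^{2j+1} - v^{-2j-1}) / {k}!, Habiro's product formula holds: P'_n · P'_m = Σ_{i=0}^{min(m,n)} ({m+n}!/({i}!·{m-i}!·{n-i}!)) · P'_{m+n-i}. -/

import Mathlib

open Polynomial

/-- The variable `v` of `ℚ(v)`. -/
noncomputable def v : RatFunc ℚ := RatFunc.X

/-- `{k}! = ∏_{j=1}^k (v^j - v^{-j})`. -/
noncomputable def qFact (k : ℕ) : RatFunc ℚ :=
  ∏ j ∈ Finset.Icc 1 k, (v ^ (j : ℤ) - v ^ (-(j : ℤ)))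

/-- `P'_k = ∏_{j=0}^{k-1}(V - v^{2j+1} - v^{-2j-1}) / {k}!` in `ℚ(v)[V]`. -/
noncomputable def Pk' (k : ℕ) : Polynomial (RatFunc ℚ) :=
  C (qFact k)⁻¹ * ∏ j ∈ Finset.range k,
    (X - C (v ^ (2 * (j : ℤ) + 1) + v ^ (-(2 * (j : ℤ) + 1))))

lemma hv : v ≠ 0 := RatFunc.X_ne_zero

/-- Balanced quantum integer `{a} = v^a - v^{-a}`. -/
noncomputable def br (a : ℤ) : RatFunc ℚ := v ^ a - v ^ (-a)

lemma br_zero : br 0 = 0 := by simp [br]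

lemma X_pow_ne_one {n : ℕ} (hn : n ≠ 0) : (RatFunc.X : RatFunc ℚ) ^ n ≠ 1 := by
  intro h
  have h2 : (algebraMap (Polynomial ℚ) (RatFunc ℚ)) (Polynomial.X ^ n) = algebraMap _ _ 1 := by
    simpa [map_pow, RatFunc.algebraMap_X] using h
  have h3 : (Polynomial.X : Polynomial ℚ) ^ n = 1 := RatFunc.algebraMap_injective ℚ h2
  have := congrArg Polynomial.natDegree h3
  simp [Polynomial.natDegree_X_pow] at this
  exact hn this

lemma v_zpow_ne_one {a : ℤ} (ha : 0 < a) : v ^ a ≠ 1 := by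
  have : v ^ a = RatFunc.X ^ a.toNat := by
    rw [show a = (a.toNat : ℤ) by omega, zpow_natCast]; rfl
  rw [this]
  exact X_pow_ne_one (by omega)

lemma br_ne_zero {a : ℤ} (ha : a ≠ 0) : br a ≠ 0 := by
  have main : ∀ b : ℤ, 0 < b → br b ≠ 0 := by
    intro b hb h
    have h1 : v ^ b = v ^ (-b) := sub_eq_zero.mp h
    have h2 : v ^ (2 * b) = 1 := by
      calc v ^ (2*b) = v ^ b * v ^ b := by rw [← zpow_add₀ hv]; ring_nf
        _ = v ^ (-b) * v ^ b := by rw [h1]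
        _ = 1 := by rw [← zpow_add₀ hv]; simp
    exact v_zpow_ne_one (by omega) h2
  rcases ha.lt_or_gt with h | h
  · intro hb
    have hneg : br (-a) = - br a := by simp only [br, neg_neg]; ring
    exact main (-a) (by omega) (by rw [hneg, hb, neg_zero])
  · exact main a h

/-- The three-term `{·}`-identity at the heart of Habiro's formula. -/
lemma key (M N I : ℤ) :
    br (M+N-I) * br (M-I) + br I * br (M+M+N-I) = br (M+N) * br M := by
  simp only [br, sub_mul, mul_sub, ← zpow_add₀ hv]
  ring

lemma qFact_zero : qFact 0 = 1 := by
  simp [qFact]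

lemma qFact_succ (k : ℕ) : qFact (k+1) = qFact k * br ((k:ℤ)+1) := by
  rw [qFact, qFact, Finset.prod_Icc_succ_top (by omega : 1 ≤ k + 1)]
  push_cast
  rfl

lemma qFact_ne_zero (k : ℕ) : qFact k ≠ 0 := by
  rw [qFact]
  apply Finset.prod_ne_zero_iff.mpr
  intro j hj
  have : (1:ℕ) ≤ j := (Finset.mem_Icc.mp hj).1
  exact br_ne_zero (by omega : (j:ℤ) ≠ 0)

lemma Pk'_zero : Pk' 0 = 1 := by
  simp [Pk', qFact_zero]

lemma Pk'_succ (k : ℕ) :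
    C (br ((k:ℤ)+1)) * Pk' (k+1)
      = Pk' k * (X - C (v ^ (2 * (k:ℤ) + 1) + v ^ (-(2 * (k:ℤ) + 1)))) := by
  have hb : br ((k:ℤ)+1) ≠ 0 := br_ne_zero (by omega)
  have hC : (C (br ((k:ℤ)+1)) : Polynomial (RatFunc ℚ)) * C ((br ((k:ℤ)+1))⁻¹) = 1 := by
    rw [← map_mul, mul_inv_cancel₀ hb, map_one]
  rw [Pk', Pk', Finset.prod_range_succ, qFact_succ, mul_inv, map_mul]
  linear_combination (C ((qFact k)⁻¹) *
    (∏ j ∈ Finset.range k,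
      (X - C (v ^ (2 * (j : ℤ) + 1) + v ^ (-(2 * (j : ℤ) + 1))))) *
    (X - C (v ^ (2 * (k:ℤ) + 1) + v ^ (-(2 * (k:ℤ) + 1))))) * hC

lemma step (k m : ℕ) :
    Pk' k * (X - C (v ^ (2 * (m:ℤ) + 1) + v ^ (-(2 * (m:ℤ) + 1)))) =
      C (br ((k:ℤ)+1)) * Pk' (k+1)
        + C (br ((k:ℤ)-(m:ℤ)) * br ((k:ℤ)+(m:ℤ)+1)) * Pk' k := by
  have hdiff : br ((k:ℤ)-(m:ℤ)) * br ((k:ℤ)+(m:ℤ)+1)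
      = (v ^ (2 * (k:ℤ) + 1) + v ^ (-(2 * (k:ℤ) + 1)))
        - (v ^ (2 * (m:ℤ) + 1) + v ^ (-(2 * (m:ℤ) + 1))) := by
    simp only [br, sub_mul, mul_sub, ← zpow_add₀ hv]
    ring
  rw [Pk'_succ, hdiff, map_sub]
  ring

/-- Habiro's structure coefficient, extended by `0` outside `0 ≤ i ≤ min m n`. -/
noncomputable def hc (m n i : ℕ) : RatFunc ℚ :=
  if i ≤ m ∧ i ≤ n then qFact (m+n) / (qFact i * qFact (m-i) * qFact (n-i)) else 0

lemma point0 (m n : ℕ) :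
    br ((m:ℤ)+1) * hc (m+1) n 0 = hc m n 0 * br ((m:ℤ)+(n:ℤ)+1) := by
  simp only [hc, if_pos (⟨Nat.zero_le _, Nat.zero_le _⟩ : 0 ≤ m+1 ∧ 0 ≤ n),
    if_pos (⟨Nat.zero_le _, Nat.zero_le _⟩ : 0 ≤ m ∧ 0 ≤ n), Nat.sub_zero, qFact_zero]
  rw [show m+1+n = (m+n)+1 by omega, qFact_succ, qFact_succ]
  push_cast
  have h1 := qFact_ne_zero (m+n)
  have h2 := qFact_ne_zero m
  have h3 := qFact_ne_zero n
  have h4 : br ((m:ℤ)+1) ≠ 0 := br_ne_zero (by omega)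
  field_simp

lemma pointS_case1 (i a b : ℕ) :
    br (((i+1+a:ℕ):ℤ)+1) * hc (i+1+a+1) (i+1+b) (i+1) =
      hc (i+1+a) (i+1+b) (i+1) * br (((i+1+a:ℕ):ℤ)+((i+1+b:ℕ):ℤ)-(i:ℤ))
      + hc (i+1+a) (i+1+b) i * (br (((i+1+b:ℕ):ℤ)-(i:ℤ)) * br (2*((i+1+a:ℕ):ℤ)+((i+1+b:ℕ):ℤ)+1-(i:ℤ))) := by
  simp only [hc, if_pos (by omega : i+1 ≤ i+1+a+1 ∧ i+1 ≤ i+1+b),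
    if_pos (by omega : i+1 ≤ i+1+a ∧ i+1 ≤ i+1+b),
    if_pos (by omega : i ≤ i+1+a ∧ i ≤ i+1+b)]
  rw [show i+1+a+1 - (i+1) = a+1 by omega, show i+1+b - (i+1) = b by omega,
      show i+1+a - (i+1) = a by omega, show i+1+a - i = a+1 by omega,
      show i+1+b - i = b+1 by omega,
      show i+1+a+1+(i+1+b) = (i+1+a+(i+1+b))+1 by omega,
      qFact_succ (i+1+a+(i+1+b)), qFact_succ i, qFact_succ a, qFact_succ b]
  push_cast
  have h1 := qFact_ne_zero (i+1+a+(i+1+b))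
  have h2 := qFact_ne_zero i
  have h3 := qFact_ne_zero a
  have h4 := qFact_ne_zero b
  have h5 : br ((i:ℤ)+1) ≠ 0 := br_ne_zero (by omega)
  have h6 : br ((a:ℤ)+1) ≠ 0 := br_ne_zero (by omega)
  have h7 : br ((b:ℤ)+1) ≠ 0 := br_ne_zero (by omega)
  push_cast at h1
  field_simp
  have K := key ((i:ℤ)+(a:ℤ)+2) ((i:ℤ)+(b:ℤ)+1) ((i:ℤ)+1)
  ring_nf at K ⊢
  linear_combination (-br (1+(b:ℤ))) * K

lemma pointS (m n i : ℕ) (hi : i ≤ m) :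
    br ((m:ℤ)+1) * hc (m+1) n (i+1) =
      hc m n (i+1) * br ((m:ℤ)+(n:ℤ)-(i:ℤ))
      + hc m n i * (br ((n:ℤ)-(i:ℤ)) * br (2*(m:ℤ)+(n:ℤ)+1-(i:ℤ))) := by
  rcases Nat.lt_or_ge n (i+1) with hn | hn
  · have h1 : ¬ (i+1 ≤ m+1 ∧ i+1 ≤ n) := by omega
    have h2 : ¬ (i+1 ≤ m ∧ i+1 ≤ n) := by omega
    simp only [hc, if_neg h1, if_neg h2, mul_zero, zero_mul, zero_add]
    rcases Nat.lt_or_ge n i with hn2 | hn2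
    · have h3 : ¬ (i ≤ m ∧ i ≤ n) := by omega
      simp [if_neg h3]
    · have hni : n = i := by omega
      subst hni
      rw [show (n:ℤ)-(n:ℤ) = 0 by ring, br_zero]
      simp
  · rcases Nat.lt_or_ge i m with him | him
    · obtain ⟨a, ha⟩ : ∃ a, m = i+1+a := ⟨m - (i+1), by omega⟩
      obtain ⟨b, hb⟩ : ∃ b, n = i+1+b := ⟨n - (i+1), by omega⟩
      subst ha hb
      exact pointS_case1 i a b
    · have him' : i = m := by omega
      subst him'
      obtain ⟨b, hb⟩ : ∃ b, n = i+1+b := ⟨n - (i+1), by omega⟩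
      subst hb
      simp only [hc, if_pos (by omega : i+1 ≤ i+1 ∧ i+1 ≤ i+1+b),
        if_neg (by omega : ¬ (i+1 ≤ i ∧ i+1 ≤ i+1+b)),
        if_pos (by omega : i ≤ i ∧ i ≤ i+1+b), zero_mul, zero_add]
      rw [show i+1 - (i+1) = 0 by omega, show i+1+b - (i+1) = b by omega,
          show i - i = 0 by omega, show i+1+b - i = b+1 by omega,
          show i+1+(i+1+b) = (i+(i+1+b))+1 by omega,
          qFact_succ (i+(i+1+b)), qFact_succ i, qFact_succ b, qFact_zero]
      push_cast
      have h1 := qFact_ne_zero (i+(i+1+b))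
      have h2 := qFact_ne_zero i
      have h3 := qFact_ne_zero b
      have h5 : br ((i:ℤ)+1) ≠ 0 := br_ne_zero (by omega)
      have h7 : br ((b:ℤ)+1) ≠ 0 := br_ne_zero (by omega)
      push_cast at h1
      field_simp
      ring_nf

lemma aux (n m : ℕ) :
    Pk' n * Pk' m = ∑ i ∈ Finset.range (m+1), C (hc m n i) * Pk' (m + n - i) := by
  induction m with
  | zero =>
    rw [Finset.sum_range_one, Pk'_zero, mul_one]
    simp [hc, qFact_zero, div_self (qFact_ne_zero n)]
  | succ m ih =>
    have hbr : br ((m:ℤ)+1) ≠ 0 := br_ne_zero (by omega)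
    have hC : (C (br ((m:ℤ)+1)) : Polynomial (RatFunc ℚ)) ≠ 0 := by
      simpa using hbr
    apply mul_left_cancel₀ hC
    set cm : RatFunc ℚ := v ^ (2 * (m:ℤ) + 1) + v ^ (-(2 * (m:ℤ) + 1)) with hcm
    have lhs1 : C (br ((m:ℤ)+1)) * (Pk' n * Pk' (m+1))
        = (∑ i ∈ Finset.range (m+1), C (hc m n i) * Pk' (m + n - i)) * (X - C cm) := by
      rw [mul_left_comm, Pk'_succ, ← ih]
      ring
    have step1 : (∑ i ∈ Finset.range (m+1), C (hc m n i) * Pk' (m + n - i)) * (X - C cm)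
        = (∑ i ∈ Finset.range (m+1),
             C (hc m n i * br ((m:ℤ)+(n:ℤ)+1-(i:ℤ))) * Pk' ((m+n-i)+1))
          + ∑ i ∈ Finset.range (m+1),
             C (hc m n i * (br ((n:ℤ)-(i:ℤ)) * br (2*(m:ℤ)+(n:ℤ)+1-(i:ℤ)))) * Pk' (m+n-i) := by
      rw [Finset.sum_mul, ← Finset.sum_add_distrib]
      apply Finset.sum_congr rfl
      intro i hi
      have hi' : i ≤ m := by have := Finset.mem_range.mp hi; omega
      calc (C (hc m n i) * Pk' (m+n-i)) * (X - C cm)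
          = C (hc m n i) * (Pk' (m+n-i) * (X - C cm)) := by ring
        _ = C (hc m n i) * (C (br (((m+n-i:ℕ):ℤ)+1)) * Pk' ((m+n-i)+1)
              + C (br (((m+n-i:ℕ):ℤ)-(m:ℤ)) * br (((m+n-i:ℕ):ℤ)+(m:ℤ)+1)) * Pk' (m+n-i)) := by
            rw [hcm, step (m+n-i) m]
        _ = _ := by
            rw [show ((m+n-i:ℕ):ℤ)+1 = (m:ℤ)+(n:ℤ)+1-(i:ℤ) by omega,
                show ((m+n-i:ℕ):ℤ)-(m:ℤ) = (n:ℤ)-(i:ℤ) by omega,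
                show ((m+n-i:ℕ):ℤ)+(m:ℤ)+1 = 2*(m:ℤ)+(n:ℤ)+1-(i:ℤ) by omega]
            simp only [map_mul]
            ring
    have step2 : C (br ((m:ℤ)+1)) * ∑ i ∈ Finset.range (m+1+1), C (hc (m+1) n i) * Pk' (m+1+n-i)
        = ((∑ i ∈ Finset.range (m+1),
              C (hc m n (i+1) * br ((m:ℤ)+(n:ℤ)-(i:ℤ))) * Pk' (m+n-i))
            + ∑ i ∈ Finset.range (m+1),
              C (hc m n i * (br ((n:ℤ)-(i:ℤ)) * br (2*(m:ℤ)+(n:ℤ)+1-(i:ℤ)))) * Pk' (m+n-i))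
          + C (hc m n 0 * br ((m:ℤ)+(n:ℤ)+1)) * Pk' ((m+n)+1) := by
      rw [Finset.mul_sum, Finset.sum_range_succ']
      congr 1
      · rw [← Finset.sum_add_distrib]
        apply Finset.sum_congr rfl
        intro i hi
        have hi' : i ≤ m := by have := Finset.mem_range.mp hi; omega
        rw [show m+1+n-(i+1) = m+n-i by omega, ← mul_assoc, ← map_mul, pointS m n i hi',
            map_add, add_mul]
      · rw [show m+1+n-0 = (m+n)+1 by omega, ← mul_assoc, ← map_mul, point0]
    have step3 : (∑ i ∈ Finset.range (m+1),
          C (hc m n i * br ((m:ℤ)+(n:ℤ)+1-(i:ℤ))) * Pk' ((m+n-i)+1))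
        = (∑ i ∈ Finset.range (m+1),
            C (hc m n (i+1) * br ((m:ℤ)+(n:ℤ)-(i:ℤ))) * Pk' (m+n-i))
          + C (hc m n 0 * br ((m:ℤ)+(n:ℤ)+1)) * Pk' ((m+n)+1) := by
      rw [Finset.sum_range_succ'
        (fun i => C (hc m n i * br ((m:ℤ)+(n:ℤ)+1-(i:ℤ))) * Pk' ((m+n-i)+1)) m]
      congr 1
      · rw [Finset.sum_range_succ]
        have hzero : hc m n (m+1) = 0 := by
          rw [hc, if_neg (by omega)]
        rw [hzero]
        simp only [zero_mul, map_zero, add_zero]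
        apply Finset.sum_congr rfl
        intro i hi
        have hi' : i < m := Finset.mem_range.mp hi
        rw [show (m+n-(i+1))+1 = m+n-i by omega,
            show ((i+1:ℕ):ℤ) = (i:ℤ)+1 by push_cast; ring,
            show (m:ℤ)+(n:ℤ)+1-((i:ℤ)+1) = (m:ℤ)+(n:ℤ)-(i:ℤ) by ring]
    rw [lhs1, step1, step2, step3]
    ring

/-- Habiro's product formula:
`P'_n · P'_m = Σ_{i=0}^{min(m,n)} ({m+n}!/({i}!{m-i}!{n-i}!)) · P'_{m+n-i}`. -/
theorem habiro_product_formula (m n : ℕ) :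
    Pk' n * Pk' m =
      ∑ i ∈ Finset.range (min m n + 1),
        C (qFact (m + n) / (qFact i * qFact (m - i) * qFact (n - i))) * Pk' (m + n - i) := by
  rw [aux n m]
  have hsub : Finset.range (min m n + 1) ⊆ Finset.range (m+1) := by
    intro x hx
    simp only [Finset.mem_range] at hx ⊢
    omega
  rw [← Finset.sum_subset hsub (fun x hx hnx => by
    have hx1 : x ≤ m := by have := Finset.mem_range.mp hx; omega
    have hx2 : ¬ (x ≤ m ∧ x ≤ n) := by
      have := Finset.mem_range.not.mp hnx
      omega
    rw [hc, if_neg hx2, map_zero, zero_mul])]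
  apply Finset.sum_congr rfl
  intro i hi
  have hi' : i ≤ min m n := by have := Finset.mem_range.mp hi; omega
  rw [hc, if_pos (by omega : i ≤ m ∧ i ≤ n)]
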